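/- Lipschitz continuity of OT in each marginal with respect to total variation: for probability vectors μ, μ', ν ∈ ℝ^n with strictly positive entries and cost matrix C with nonnegative entries, |W(μ,ν) − W(μ',ν)| ≤ C_∞ · ‖μ − μ'‖₁, where C_∞ = max_{i,j} C_{ij}. -/
import Mathlib

open Finset in
private lemma ot_key (n : ℕ) [Nonempty (Fin n)] (μ μ' ν : Fin n → ℝ)
    (C : Matrix (Fin n) (Fin n) ℝ) (hC : ∀ i j, 0 ≤ C i j)
    (hμ : ∀ i, 0 ≤ μ i) (hμ' : ∀ i, 0 < μ' i) (hν : ∀ j, 0 ≤ ν j)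
    (hμ1 : ∑ i, μ i = 1) (hμ'1 : ∑ i, μ' i = 1) (hν1 : ∑ j, ν j = 1) :
    sInf {x : ℝ | ∃ γ : Matrix (Fin n) (Fin n) ℝ,
        (∀ i j, 0 ≤ γ i j) ∧ (∀ i, ∑ j, γ i j = μ i) ∧ (∀ j, ∑ i, γ i j = ν j) ∧
        x = ∑ i, ∑ j, C i j * γ i j} ≤
    sInf {x : ℝ | ∃ γ : Matrix (Fin n) (Fin n) ℝ,
        (∀ i j, 0 ≤ γ i j) ∧ (∀ i, ∑ j, γ i j = μ' i) ∧ (∀ j, ∑ i, γ i j = ν j) ∧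
        x = ∑ i, ∑ j, C i j * γ i j} +
      (Finset.univ.sup' Finset.univ_nonempty
        (fun i => Finset.univ.sup' Finset.univ_nonempty (fun j => C i j))) *
      ∑ i, |μ i - μ' i| := by
  set M : ℝ := Finset.univ.sup' Finset.univ_nonempty
      (fun i => Finset.univ.sup' Finset.univ_nonempty (fun j => C i j)) with hMdef
  set A := {x : ℝ | ∃ γ : Matrix (Fin n) (Fin n) ℝ,
        (∀ i j, 0 ≤ γ i j) ∧ (∀ i, ∑ j, γ i j = μ i) ∧ (∀ j, ∑ i, γ i j = ν j) ∧
        x = ∑ i, ∑ j, C i j * γ i j} with hA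
  set B := {x : ℝ | ∃ γ : Matrix (Fin n) (Fin n) ℝ,
        (∀ i j, 0 ≤ γ i j) ∧ (∀ i, ∑ j, γ i j = μ' i) ∧ (∀ j, ∑ i, γ i j = ν j) ∧
        x = ∑ i, ∑ j, C i j * γ i j} with hB
  have hM : ∀ i j, C i j ≤ M := fun i j =>
    (Finset.le_sup' (fun j => C i j) (Finset.mem_univ j)).trans
      (Finset.le_sup' (fun i => Finset.univ.sup' Finset.univ_nonempty (fun j => C i j))
        (Finset.mem_univ i))
  obtain ⟨i0⟩ := ‹Nonempty (Fin n)›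
  have hM0 : 0 ≤ M := (hC i0 i0).trans (hM i0 i0)
  have hT0 : 0 ≤ ∑ i, |μ i - μ' i| := Finset.sum_nonneg fun i _ => abs_nonneg _
  have hAbdd : BddBelow A := by
    refine ⟨0, fun x hx => ?_⟩
    obtain ⟨γ, h0, -, -, hxe⟩ := hx
    rw [hxe]
    exact Finset.sum_nonneg fun i _ => Finset.sum_nonneg fun j _ =>
      mul_nonneg (hC i j) (h0 i j)
  have hBne : B.Nonempty := by
    refine ⟨∑ i, ∑ j, C i j * ((fun i j => μ' i * ν j) i j),
      (fun i j => μ' i * ν j), fun i j => mul_nonneg (hμ' i).le (hν j), ?_, ?_, rfl⟩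
    · intro i; rw [← Finset.mul_sum, hν1, mul_one]
    · intro j; rw [← Finset.sum_mul, hμ'1, one_mul]
  have key : ∀ x ∈ B, sInf A ≤ x + M * ∑ i, |μ i - μ' i| := by
    intro x hx
    obtain ⟨γ', hγ'0, hrow, hcol, hxe⟩ := hx
    set m : Fin n → ℝ := fun i => min (μ i) (μ' i) with hm
    set s : ℝ := ∑ i, (μ i - m i) with hsdef
    have hp0 : ∀ i, 0 ≤ μ i - m i := fun i => sub_nonneg.mpr (min_le_left _ _)
    have hs0 : 0 ≤ s := Finset.sum_nonneg fun i _ => hp0 i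
    have hsT : s ≤ ∑ i, |μ i - μ' i| := by
      refine Finset.sum_le_sum fun i _ => ?_
      rcases le_total (μ i) (μ' i) with h | h
      · simp [hm, min_eq_left h, abs_nonneg]
      · simp only [hm, min_eq_right h]
        exact le_abs_self _
    by_cases hs : s = 0
    · -- then μ = μ' and γ' itself works
      have hz : ∀ i ∈ Finset.univ, μ i - m i = 0 :=
        (Finset.sum_eq_zero_iff_of_nonneg fun i _ => hp0 i).1
          (by rw [← hsdef]; exact hs)
      have hle : ∀ i ∈ Finset.univ, μ i ≤ μ' i := by
        intro i hi
        have := hz i hi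
        have hmi : μ i = m i := by linarith
        rw [hmi]; exact min_le_right _ _
      have heq : ∀ i, μ i = μ' i := by
        have := (Finset.sum_eq_sum_iff_of_le hle).1 (by rw [hμ1, hμ'1])
        exact fun i => this i (Finset.mem_univ i)
      have hxA : x ∈ A :=
        ⟨γ', hγ'0, fun i => (hrow i).trans (heq i).symm, hcol, hxe⟩
      have := csInf_le hAbdd hxA
      nlinarith [mul_nonneg hM0 hT0]
    · have hspos : 0 < s := lt_of_le_of_ne hs0 (Ne.symm hs)
      set a : Fin n → ℝ := fun i => m i / μ' i with ha
      have hm0 : ∀ i, 0 ≤ m i := fun i => le_min (hμ i) (hμ' i).le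
      have ha0 : ∀ i, 0 ≤ a i := fun i => div_nonneg (hm0 i) (hμ' i).le
      have ha1 : ∀ i, a i ≤ 1 := fun i => (div_le_one (hμ' i)).2 (min_le_right _ _)
      have haμ' : ∀ i, a i * μ' i = m i := fun i => div_mul_cancel₀ _ (hμ' i).ne'
      set q : Fin n → ℝ := fun j => ∑ i, (1 - a i) * γ' i j with hqdef
      have hq0 : ∀ j, 0 ≤ q j := fun j => Finset.sum_nonneg fun i _ =>
        mul_nonneg (by linarith [ha1 i]) (hγ'0 i j)
      have hqsum : ∑ j, q j = s := by
        have h1 : ∑ j, q j = ∑ i, (μ' i - m i) := by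
          rw [hqdef]
          rw [Finset.sum_comm]
          refine Finset.sum_congr rfl fun i _ => ?_
          rw [← Finset.mul_sum, hrow i, sub_mul, one_mul, haμ' i]
        rw [h1, hsdef, Finset.sum_sub_distrib, Finset.sum_sub_distrib, hμ1, hμ'1]
      set γ : Matrix (Fin n) (Fin n) ℝ :=
        fun i j => a i * γ' i j + (μ i - m i) * q j / s with hγdef
      have hγ0 : ∀ i j, 0 ≤ γ i j := fun i j =>
        add_nonneg (mul_nonneg (ha0 i) (hγ'0 i j))
          (div_nonneg (mul_nonneg (hp0 i) (hq0 j)) hs0)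
      have hrowγ : ∀ i, ∑ j, γ i j = μ i := by
        intro i
        have e : ∑ j, γ i j = a i * (∑ j, γ' i j) + (μ i - m i) * (∑ j, q j) / s := by
          rw [hγdef]
          rw [Finset.sum_add_distrib, ← Finset.mul_sum, ← Finset.sum_div, ← Finset.mul_sum]
        rw [e, hrow i, haμ' i, hqsum, mul_div_assoc, div_self hs, mul_one]
        ring
      have hcolγ : ∀ j, ∑ i, γ i j = ν j := by
        intro j
        have h2 : ∑ i, a i * γ' i j = ν j - q j := by
          have hq : q j = ∑ i, γ' i j - ∑ i, a i * γ' i j := by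
            rw [hqdef]
            simp only [sub_mul, one_mul]
            rw [Finset.sum_sub_distrib]
          rw [hcol j] at hq
          linarith
        have e : ∑ i, γ i j = (∑ i, a i * γ' i j) + (∑ i, (μ i - m i)) * q j / s := by
          rw [hγdef, Finset.sum_add_distrib, ← Finset.sum_div, ← Finset.sum_mul]
        rw [e, h2, ← hsdef, mul_comm s, mul_div_assoc, div_self hs, mul_one]
        ring
      have hcost : ∑ i, ∑ j, C i j * γ i j ≤ x + M * s := by
        have h1 : ∀ i j, C i j * γ i j ≤ C i j * γ' i j + M * ((μ i - m i) * q j / s) := by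
          intro i j
          have e : C i j * γ i j
              = C i j * (a i * γ' i j) + C i j * ((μ i - m i) * q j / s) := by
            rw [hγdef]; ring
          rw [e]
          have t0 : 0 ≤ (μ i - m i) * q j / s :=
            div_nonneg (mul_nonneg (hp0 i) (hq0 j)) hs0
          have l1 : C i j * (a i * γ' i j) ≤ C i j * γ' i j := by
            have : a i * γ' i j ≤ γ' i j := by nlinarith [ha1 i, hγ'0 i j, ha0 i]
            exact mul_le_mul_of_nonneg_left this (hC i j)
          have l2 : C i j * ((μ i - m i) * q j / s) ≤ M * ((μ i - m i) * q j / s) :=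
            mul_le_mul_of_nonneg_right (hM i j) t0
          linarith
        have h2 : ∑ i, ∑ j, (M * ((μ i - m i) * q j / s)) = M * s := by
          have e1 : ∀ i, ∑ j, M * ((μ i - m i) * q j / s)
              = M * (μ i - m i) / s * ∑ j, q j := by
            intro i
            rw [Finset.mul_sum]
            exact Finset.sum_congr rfl fun j _ => by ring
          calc ∑ i, ∑ j, M * ((μ i - m i) * q j / s)
              = ∑ i, M * (μ i - m i) / s * s := by
                refine Finset.sum_congr rfl fun i _ => ?_
                rw [e1 i, hqsum]
            _ = ∑ i, M * (μ i - m i) := by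
                refine Finset.sum_congr rfl fun i _ => ?_
                rw [div_mul_cancel₀ _ hs]
            _ = M * s := by rw [← Finset.mul_sum, ← hsdef]
        calc ∑ i, ∑ j, C i j * γ i j
            ≤ ∑ i, ∑ j, (C i j * γ' i j + M * ((μ i - m i) * q j / s)) := by
              refine Finset.sum_le_sum fun i _ => Finset.sum_le_sum fun j _ => h1 i j
          _ = (∑ i, ∑ j, C i j * γ' i j) + ∑ i, ∑ j, M * ((μ i - m i) * q j / s) := by
              rw [← Finset.sum_add_distrib]
              exact Finset.sum_congr rfl fun i _ => Finset.sum_add_distrib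
          _ ≤ x + M * s := by rw [hxe, h2]
      have hmem : (∑ i, ∑ j, C i j * γ i j) ∈ A := ⟨γ, hγ0, hrowγ, hcolγ, rfl⟩
      have h3 := csInf_le hAbdd hmem
      have h4 : M * s ≤ M * ∑ i, |μ i - μ' i| := mul_le_mul_of_nonneg_left hsT hM0
      linarith
  have hstep : sInf A - M * ∑ i, |μ i - μ' i| ≤ sInf B :=
    le_csInf hBne fun x hx => by linarith [key x hx]
  linarith

/-- Lipschitz continuity of the OT cost in the first marginal w.r.t. total variation:
`|W(μ,ν) − W(μ',ν)| ≤ C_∞ ‖μ − μ'‖₁`. -/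
theorem ot_lipschitz_in_marginal (n : ℕ) (hn : 0 < n) (μ μ' ν : Fin n → ℝ)
    (C : Matrix (Fin n) (Fin n) ℝ) (hC : ∀ i j, 0 ≤ C i j)
    (hμ : ∀ i, 0 < μ i) (hμ' : ∀ i, 0 < μ' i) (hν : ∀ j, 0 < ν j)
    (hμ1 : ∑ i, μ i = 1) (hμ'1 : ∑ i, μ' i = 1) (hν1 : ∑ j, ν j = 1) :
    haveI : Nonempty (Fin n) := Fin.pos_iff_nonempty.mp hn
    |sInf {x : ℝ | ∃ γ : Matrix (Fin n) (Fin n) ℝ,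
        (∀ i j, 0 ≤ γ i j) ∧ (∀ i, ∑ j, γ i j = μ i) ∧ (∀ j, ∑ i, γ i j = ν j) ∧
        x = ∑ i, ∑ j, C i j * γ i j} -
     sInf {x : ℝ | ∃ γ : Matrix (Fin n) (Fin n) ℝ,
        (∀ i j, 0 ≤ γ i j) ∧ (∀ i, ∑ j, γ i j = μ' i) ∧ (∀ j, ∑ i, γ i j = ν j) ∧
        x = ∑ i, ∑ j, C i j * γ i j}| ≤
      (Finset.univ.sup' Finset.univ_nonempty
        (fun i => Finset.univ.sup' Finset.univ_nonempty (fun j => C i j))) *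
      ∑ i, |μ i - μ' i| := by
  haveI : Nonempty (Fin n) := Fin.pos_iff_nonempty.mp hn
  rw [abs_sub_le_iff]
  constructor
  · have h := ot_key n μ μ' ν C hC (fun i => (hμ i).le) hμ' (fun j => (hν j).le)
      hμ1 hμ'1 hν1
    linarith
  · have h := ot_key n μ' μ ν C hC (fun i => (hμ' i).le) hμ (fun j => (hν j).le)
      hμ'1 hμ1 hν1
    have e : ∑ i, |μ' i - μ i| = ∑ i, |μ i - μ' i| :=
      Finset.sum_congr rfl fun i _ => abs_sub_comm _ _
    rw [e] at h
    linarith
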